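/- arXiv:1511.01716 — 2 statements merged into one kernel-verified Lean document; each statement's English description precedes it below -/
import Mathlib

section
/- Let F be convex with minimizer x*, D symmetric positive definite, F_D(y) = min_x (F(x) + ½‖x−y‖²_D) the Moreau–Yosida regularization, and prox_F(y) its minimizer. If F̃ is convex with F̃ ≤ F, z minimizes x ↦ F̃(x) + ½‖x−y‖²_D, and η = F̃(z) + ½‖z−y‖²_D, then ½‖z − prox_F(y)‖²_D ≤ F_D(y) − η. -/
/-!
The model `x ↦ F̃ x + ½‖x - y‖²_D` is convex plus a quadratic, so comparing its value at the
minimizer `z` with its values on the segment from `z` to any point `x` and letting the segment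
shrink gives the strong-convexity bound `η + ½‖x - z‖²_D ≤ F̃ x + ½‖x - y‖²_D`. At `x = prox_F y`
the right-hand side is at most `F_D y`, since `F̃ ≤ F`.
-/

open Matrix Filter Topology Set

theorem QuadraticForm.map_one_sub_smul_add_smul {R M : Type*} [CommRing R] [AddCommGroup M]
    [Module R M] (Q : QuadraticForm R M) (a b : M) (t : R) :
    Q ((1 - t) • a + t • b) = (1 - t) * Q a + t * Q b - t * (1 - t) * Q (a - b) := by
  have map_add : ∀ u v, Q (u + v) = Q u + Q v + QuadraticMap.polar Q u v := fun u v => by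
    simp only [QuadraticMap.polar]; ring
  rw [map_add, sub_eq_add_neg a b, map_add, QuadraticMap.map_smul, QuadraticMap.map_smul,
    QuadraticMap.map_neg, QuadraticMap.polar_smul_left, QuadraticMap.polar_smul_right,
    QuadraticMap.polar_neg_right]
  simp only [smul_eq_mul]
  ring

section StrongConvexity

variable {E : Type*} [AddCommGroup E] [Module ℝ E] {f : E → ℝ} {Q : QuadraticForm ℝ E} {y z : E}

theorem ConvexOn.add_half_quadratic_le_of_forall_le_of_mem_Ioc (hf : ConvexOn ℝ univ f)
    (hz : ∀ x, f z + (1/2) * Q (z - y) ≤ f x + (1/2) * Q (x - y)) (x : E) {t : ℝ}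
    (ht : t ∈ Ioc 0 1) :
    f z + (1/2) * Q (z - y) + (1 - t) * ((1/2) * Q (z - x)) ≤ f x + (1/2) * Q (x - y) := by
  obtain ⟨ht0, ht1⟩ := ht
  have hconv : f ((1 - t) • z + t • x) ≤ (1 - t) * f z + t * f x :=
    hf.2 (mem_univ z) (mem_univ x) (by linarith) ht0.le (by ring)
  have hquad : Q ((1 - t) • z + t • x - y)
      = (1 - t) * Q (z - y) + t * Q (x - y) - t * (1 - t) * Q (z - x) := by
    have hsplit : (1 - t) • z + t • x - y = (1 - t) • (z - y) + t • (x - y) := by module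
    rw [hsplit, Q.map_one_sub_smul_add_smul, sub_sub_sub_cancel_right]
  have hmin := hz ((1 - t) • z + t • x)
  rw [hquad] at hmin
  nlinarith

theorem ConvexOn.add_half_quadratic_le_of_forall_le (hf : ConvexOn ℝ univ f)
    (hz : ∀ x, f z + (1/2) * Q (z - y) ≤ f x + (1/2) * Q (x - y)) (x : E) :
    f z + (1/2) * Q (z - y) + (1/2) * Q (z - x) ≤ f x + (1/2) * Q (x - y) := by
  have hlim : Tendsto (fun t : ℝ => f z + (1/2) * Q (z - y) + (1 - t) * ((1/2) * Q (z - x)))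
      (𝓝[>] 0) (𝓝 (f z + (1/2) * Q (z - y) + (1/2) * Q (z - x))) := by
    have hcont : Continuous fun t : ℝ =>
        f z + (1/2) * Q (z - y) + (1 - t) * ((1/2) * Q (z - x)) := by
      fun_prop
    simpa using (hcont.tendsto 0).mono_left nhdsWithin_le_nhds
  refine le_of_tendsto hlim ?_
  filter_upwards [Ioc_mem_nhdsGT one_pos] with t ht
  exact hf.add_half_quadratic_le_of_forall_le_of_mem_Ioc hz x ht

end StrongConvexity

theorem stmt_2_general (n : ℕ) (D : Matrix (Fin n) (Fin n) ℝ)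
    (F Ft : (Fin n → ℝ) → ℝ)
    (hFt : ConvexOn ℝ Set.univ Ft)
    (hle : ∀ x, Ft x ≤ F x) (y z p : Fin n → ℝ)
    (hz : ∀ x, Ft z + (1/2) * ((z - y) ⬝ᵥ D.mulVec (z - y))
            ≤ Ft x + (1/2) * ((x - y) ⬝ᵥ D.mulVec (x - y)))
    (η : ℝ) (hη : η = Ft z + (1/2) * ((z - y) ⬝ᵥ D.mulVec (z - y))) :
    (1/2) * ((z - p) ⬝ᵥ D.mulVec (z - p))
      ≤ (F p + (1/2) * ((p - y) ⬝ᵥ D.mulVec (p - y))) - η := by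
  have hQ : ∀ v, v ⬝ᵥ D *ᵥ v = D.toQuadraticForm' v := fun v => by
    simp [toQuadraticForm', toLinearMap₂'_apply']
  simp only [hQ] at hz hη ⊢
  linarith [hFt.add_half_quadratic_le_of_forall_le hz p, hle p]

/-- distance estimate between the minimizer of the linearized
proximal problem and the proximal point of `F`. -/
theorem stmt_2 (n : ℕ) (D : Matrix (Fin n) (Fin n) ℝ) (hD : D.PosDef)
    (F Ft : (Fin n → ℝ) → ℝ)
    (hF : ConvexOn ℝ Set.univ F) (hFt : ConvexOn ℝ Set.univ Ft)
    (hle : ∀ x, Ft x ≤ F x) (y z p : Fin n → ℝ)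
    (hz : ∀ x, Ft z + (1/2) * ((z - y) ⬝ᵥ D.mulVec (z - y))
            ≤ Ft x + (1/2) * ((x - y) ⬝ᵥ D.mulVec (x - y)))
    (hp : ∀ x, F p + (1/2) * ((p - y) ⬝ᵥ D.mulVec (p - y))
            ≤ F x + (1/2) * ((x - y) ⬝ᵥ D.mulVec (x - y)))
    (η : ℝ) (hη : η = Ft z + (1/2) * ((z - y) ⬝ᵥ D.mulVec (z - y))) :
    (1/2) * ((z - p) ⬝ᵥ D.mulVec (z - p))
      ≤ (F p + (1/2) * ((p - y) ⬝ᵥ D.mulVec (p - y))) - η :=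
  stmt_2_general n D F Ft hFt hle y z p hz η hη
end

section
/- Let d > 0, s ∈ ℝᵐ, y ∈ ℝᵐ, and D a positive definite diagonal m×m matrix. Consider h(x) = d‖x‖₂ + ⟨s, x⟩ + ½‖x − y‖²_D. If Σ_i (D_ii y_i − s_i)² ≤ d², then x = 0 minimizes h. -/
open Matrix

/-!
Expanding the weighted square, `h x - h 0 = d ‖x‖₂ - ⟨D y - s, x⟩ + ½ ‖x‖²_D`. The last term is
nonnegative, and by Cauchy–Schwarz `⟨D y - s, x⟩ ≤ ‖D y - s‖₂ ‖x‖₂ ≤ d ‖x‖₂`.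
-/

section

variable {ι : Type*} [Fintype ι]

theorem dotProduct_le_mul_sqrt_sum_sq {d : ℝ} (hd : 0 ≤ d) {v : ι → ℝ}
    (hv : ∑ i, v i ^ 2 ≤ d ^ 2) (x : ι → ℝ) :
    x ⬝ᵥ v ≤ d * √(∑ i, x i ^ 2) :=
  calc x ⬝ᵥ v ≤ √(∑ i, x i ^ 2) * √(∑ i, v i ^ 2) :=
        Real.sum_mul_le_sqrt_mul_sqrt _ x v
    _ ≤ √(∑ i, x i ^ 2) * d := by
        gcongr
        exact (Real.sqrt_le_sqrt hv).trans_eq (Real.sqrt_sq hd)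
    _ = d * √(∑ i, x i ^ 2) := mul_comm _ _

theorem sum_mul_sub_sq (D x y : ι → ℝ) :
    ∑ i, D i * (x i - y i) ^ 2 =
      ∑ i, D i * x i ^ 2 - 2 * x ⬝ᵥ (D * y) + ∑ i, D i * y i ^ 2 := by
  simp only [dotProduct, Pi.mul_apply, Finset.mul_sum, ← Finset.sum_sub_distrib,
    ← Finset.sum_add_distrib]
  exact Finset.sum_congr rfl fun i _ => by ring

end

/-- vanishing condition for the group-lasso proximal subproblem:
if `Σᵢ (Dᵢᵢ yᵢ − sᵢ)² ≤ d²` then `x = 0` minimizes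
`h(x) = d‖x‖₂ + ⟨s,x⟩ + ½‖x − y‖²_D`. -/
theorem stmt_17 (m : ℕ) (d : ℝ) (hd : 0 < d) (s y : Fin m → ℝ)
    (Dd : Fin m → ℝ) (hDd : ∀ i, 0 < Dd i)
    (hcond : (∑ i, (Dd i * y i - s i) ^ 2) ≤ d ^ 2) :
    ∀ x : Fin m → ℝ,
      d * Real.sqrt (∑ i : Fin m, ((0 : Fin m → ℝ) i) ^ 2)
        + s ⬝ᵥ (0 : Fin m → ℝ)
        + (1/2) * ∑ i : Fin m, Dd i * ((0 : Fin m → ℝ) i - y i) ^ 2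
      ≤ d * Real.sqrt (∑ i, (x i) ^ 2) + s ⬝ᵥ x
        + (1/2) * ∑ i, Dd i * (x i - y i) ^ 2 := by
  intro x
  have hcs : x ⬝ᵥ (Dd * y - s) ≤ d * √(∑ i, x i ^ 2) :=
    dotProduct_le_mul_sqrt_sum_sq hd.le hcond x
  have hquad : 0 ≤ ∑ i, Dd i * x i ^ 2 :=
    Finset.sum_nonneg fun i _ => mul_nonneg (hDd i).le (sq_nonneg _)
  rw [dotProduct_sub, dotProduct_comm x s] at hcs
  rw [sum_mul_sub_sq, sum_mul_sub_sq]
  simp only [Pi.zero_apply, zero_pow two_ne_zero, mul_zero, Finset.sum_const_zero,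
    Real.sqrt_zero, dotProduct_zero, zero_dotProduct]
  linarith
end
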